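/- Let n ≥ 2, let T = (T_{ab}^c) be a torsion-type tensor and C = (C_{j;i}) a real n×n matrix. Then T satisfies all n compatibility equations (Σ_{a<b, c} σ_{ab;i}^c(y)·T_{ab}^c = 2·Σ_j C_{j;i}·y_j for all y ∈ ℝⁿ and all i ∈ {1,…,n}) if and only if the following hold: C_{n;i} = 0 for all i ∈ {1,…,n}; T_{an}^n = C_{a;n} for all a < n; T_{an}^a = C_{a;a} for all a < n; T_{ab}^n = C_{a;b} − C_{b;a} for all a < b < n; and T_{an}^c + T_{cn}^a = C_{a;c} + C_{c;a} for all a ≠ c with a, c < n. In particular the components T_{ab}^c with a < b < n and c < n are unconstrained. -/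

import Mathlib

open Finset

/-- The last index `n` of `{1,…,n}`, realized as the final element of `Fin n`. -/
def lastIdx (n : ℕ) (hn : 1 ≤ n) : Fin n := ⟨n - 1, by omega⟩

/-- The coefficient `σ_{ab;i}^c(y) = (δᵢᶜyₐ + δᵢᵃy_c)δ_bⁿ + (δᵢᵇyₐ − δᵢᵃy_b)δ_cⁿ` of the
torsion component `T_{ab}^c` in the `i`-th compatibility equation of a Randers metric. -/
noncomputable def sigma (n : ℕ) (hn : 1 ≤ n) (a b c i : Fin n) (y : Fin n → ℝ) : ℝ :=
  ((if i = c then (1 : ℝ) else 0) * y a + (if i = a then (1 : ℝ) else 0) * y c) *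
      (if b = lastIdx n hn then (1 : ℝ) else 0) +
    ((if i = b then (1 : ℝ) else 0) * y a - (if i = a then (1 : ℝ) else 0) * y b) *
      (if c = lastIdx n hn then (1 : ℝ) else 0)

/-- A torsion-type tensor: a family `T_{ab}^c` of reals, skew-symmetric in the lower
indices. -/
def IsSkew (n : ℕ) (T : Fin n → Fin n → Fin n → ℝ) : Prop :=
  ∀ a b c, T a b c = - T b a c

/-- The left-hand side `Σ_{a<b, c} σ_{ab;i}^c(y)·T_{ab}^c` of the `i`-th compatibility
equation. -/
noncomputable def compatLHS (n : ℕ) (hn : 1 ≤ n) (T : Fin n → Fin n → Fin n → ℝ)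
    (i : Fin n) (y : Fin n → ℝ) : ℝ :=
  ∑ a : Fin n, ∑ b : Fin n, ∑ c : Fin n,
    if a < b then sigma n hn a b c i y * T a b c else 0

/-!
For skew `T`, the coefficient of `y_j` in the `i`-th compatibility equation is
`T_{jn}^i + T_{in}^j + T_{ji}^n`, so the equations for all `y` amount to the `n²` scalar
equations `T_{jn}^i + T_{in}^j + T_{ji}^n = 2 C_{j;i}`. For `j = n` the left side vanishes
by skew-symmetry, which forces `C_{n;i} = 0`; for `i = n` or `i = j` it is twice a single
component. For `i ≠ j` both below `n`, the sum and the difference of the `(i, j)` and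
`(j, i)` equations are the last two conditions.
-/

section lastIdx

variable {n : ℕ} (hn : 1 ≤ n)

theorem le_lastIdx (x : Fin n) : x ≤ lastIdx n hn := by
  simp only [lastIdx, Fin.le_def]
  omega

theorem lt_lastIdx_or_eq (x : Fin n) : x < lastIdx n hn ∨ x = lastIdx n hn :=
  (le_lastIdx hn x).lt_or_eq

end lastIdx

theorem IsSkew.apply_self {n : ℕ} {T : Fin n → Fin n → Fin n → ℝ} (hT : IsSkew n T)
    (a c : Fin n) : T a a c = 0 := by
  linarith [hT a a c]

section compatLHS

variable {n : ℕ} (hn : 1 ≤ n) (T : Fin n → Fin n → Fin n → ℝ)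

def compatCoeff (i j : Fin n) : ℝ :=
  T j (lastIdx n hn) i + T i (lastIdx n hn) j + T j i (lastIdx n hn)

theorem compatLHS_eq_sum_ite (i : Fin n) (y : Fin n → ℝ) :
    compatLHS n hn T i y =
      ∑ j : Fin n, ((if j < lastIdx n hn then T j (lastIdx n hn) i else 0)
        + (if i < lastIdx n hn then T i (lastIdx n hn) j else 0)
        + (if j < i then T j i (lastIdx n hn) else 0)
        + (if i < j then - T i j (lastIdx n hn) else 0)) * y j := by
  set N := lastIdx n hn with hN
  -- split `σ` into its four Kronecker terms; each then collapses one of the three sums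
  have expand : ∀ a b c : Fin n,
      (if a < b then sigma n hn a b c i y * T a b c else 0) =
        (if i = c then (if b = N then (if a < b then y a * T a b c else 0) else 0) else 0)
      + (if b = N then (if i = a then (if a < b then y c * T a b c else 0) else 0) else 0)
      + (if i = b then (if c = N then (if a < b then y a * T a b c else 0) else 0) else 0)
      + (if i = a then (if c = N then (if a < b then -(y b * T a b c) else 0) else 0) else 0) := by
    intro a b c
    rw [sigma, ← hN]
    split_ifs <;> ring
  simp only [compatLHS, expand, Finset.sum_add_distrib]
  simp [Finset.sum_ite_irrel, Finset.sum_add_distrib, mul_comm, mul_add, mul_ite]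

variable {T}

theorem IsSkew.compatLHS_eq_dotProduct (hT : IsSkew n T) (i : Fin n) (y : Fin n → ℝ) :
    compatLHS n hn T i y = compatCoeff hn T i ⬝ᵥ y := by
  rw [compatLHS_eq_sum_ite, dotProduct]
  refine Finset.sum_congr rfl fun j _ => congrArg (· * y j) ?_
  have guard_last : ∀ x c : Fin n,
      (if x < lastIdx n hn then T x (lastIdx n hn) c else 0) = T x (lastIdx n hn) c := by
    intro x c
    rcases lt_lastIdx_or_eq hn x with hx | rfl
    · rw [if_pos hx]
    · rw [if_neg (lt_irrefl _), hT.apply_self]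
  have guard_order : ((if j < i then T j i (lastIdx n hn) else 0)
      + if i < j then -T i j (lastIdx n hn) else 0) = T j i (lastIdx n hn) := by
    rcases lt_trichotomy j i with hji | rfl | hij
    · simp [hji, hji.not_gt]
    · simp [hT.apply_self]
    · simp [hij, hij.not_gt, hT j i]
  rw [guard_last, guard_last, add_assoc, guard_order, compatCoeff]

theorem IsSkew.forall_compatLHS_eq_iff (hT : IsSkew n T) (C : Fin n → Fin n → ℝ) :
    (∀ i : Fin n, ∀ y : Fin n → ℝ, compatLHS n hn T i y = 2 * ∑ j : Fin n, C j i * y j) ↔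
      ∀ i j : Fin n, compatCoeff hn T i j = 2 * C j i := by
  have rhs : ∀ i (y : Fin n → ℝ), 2 * ∑ j, C j i * y j = (fun j => 2 * C j i) ⬝ᵥ y := by
    intro i y
    simp only [dotProduct, Finset.mul_sum, mul_assoc]
  simp only [hT.compatLHS_eq_dotProduct, rhs, dotProduct_eq_iff, funext_iff]

theorem IsSkew.forall_compatCoeff_eq_iff (hT : IsSkew n T) (C : Fin n → Fin n → ℝ) :
    (∀ i j : Fin n, compatCoeff hn T i j = 2 * C j i) ↔
      ((∀ i : Fin n, C (lastIdx n hn) i = 0) ∧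
        (∀ a : Fin n, a < lastIdx n hn → T a (lastIdx n hn) (lastIdx n hn) = C a (lastIdx n hn)) ∧
        (∀ a : Fin n, a < lastIdx n hn → T a (lastIdx n hn) a = C a a) ∧
        (∀ a b : Fin n, a < b → b < lastIdx n hn → T a b (lastIdx n hn) = C a b - C b a) ∧
        (∀ a c : Fin n, a < lastIdx n hn → c < lastIdx n hn → a ≠ c →
          T a (lastIdx n hn) c + T c (lastIdx n hn) a = C a c + C c a)) := by
  set N := lastIdx n hn
  have hz := hT.apply_self
  simp only [compatCoeff]
  constructor
  · intro h
    refine ⟨fun i => ?_, fun a _ => ?_, fun a _ => ?_, fun a b _ _ => ?_, fun a c _ _ _ => ?_⟩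
    · linarith [h i N, hz N i, hT N i N]
    · linarith [h N a, hz N a]
    · linarith [h a a, hz a N]
    · linarith [h b a, h a b, hT a b N]
    · linarith [h c a, h a c, hT a c N]
  · rintro ⟨hC, hlast, hdiag, hskew, hsymm⟩ i j
    rcases lt_lastIdx_or_eq hn j with hj | rfl
    · rcases lt_lastIdx_or_eq hn i with hi | rfl
      · rcases lt_trichotomy j i with hji | rfl | hij
        · linarith [hskew j i hji hi, hsymm j i hj hi hji.ne]
        · linarith [hdiag j hj, hz j N]
        · linarith [hskew i j hij hj, hsymm j i hj hi hij.ne', hT j i N]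
      · linarith [hlast j hj, hz N j]
    · linarith [hC i, hz N i, hT N i N]

end compatLHS

/-- a torsion-type tensor `T` satisfies all `n` compatibility equations if
and only if: `C_{n;i} = 0` for all `i`; `T_{an}^n = C_{a;n}` for all `a < n`;
`T_{an}^a = C_{a;a}` for all `a < n`; `T_{ab}^n = C_{a;b} − C_{b;a}` for all `a < b < n`;
and `T_{an}^c + T_{cn}^a = C_{a;c} + C_{c;a}` for all `a ≠ c` with `a, c < n`. -/
theorem compatibility_characterization (n : ℕ) (hn : 2 ≤ n)
    (T : Fin n → Fin n → Fin n → ℝ) (hT : IsSkew n T) (C : Fin n → Fin n → ℝ) :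
    (∀ i : Fin n, ∀ y : Fin n → ℝ,
        compatLHS n (by omega) T i y = 2 * ∑ j : Fin n, C j i * y j) ↔
      ((∀ i : Fin n, C (lastIdx n (by omega)) i = 0) ∧
        (∀ a : Fin n, a < lastIdx n (by omega) →
          T a (lastIdx n (by omega)) (lastIdx n (by omega)) = C a (lastIdx n (by omega))) ∧
        (∀ a : Fin n, a < lastIdx n (by omega) →
          T a (lastIdx n (by omega)) a = C a a) ∧
        (∀ a b : Fin n, a < b → b < lastIdx n (by omega) →
          T a b (lastIdx n (by omega)) = C a b - C b a) ∧
        (∀ a c : Fin n, a < lastIdx n (by omega) → c < lastIdx n (by omega) → a ≠ c →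
          T a (lastIdx n (by omega)) c + T c (lastIdx n (by omega)) a = C a c + C c a)) :=
  (hT.forall_compatLHS_eq_iff _ C).trans (hT.forall_compatCoeff_eq_iff _ C)
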